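/- arXiv:1603.08496 — 3 statements merged into one kernel-verified Lean document; each statement's English description precedes it below -/
import Mathlib

section
/- Let Q₁, …, Q_N be pairwise disjoint compact rectangles in ℝ² with sides parallel to the axes, and let Q be their union. For λ > 0, let D(λ, Q) denote the number of Dirichlet Laplacian eigenvalues of Q (counted with multiplicity, the union of the eigenvalue lists of the rectangles) that are ≤ λ. Then 4π·D(λ,Q)/λ ≥ Area(Q) − 2·Perimeter(Q)·λ^{−1/2}. -/
/-!
Rescaling by `√λ / π` turns the eigenvalue count of a `w × h` rectangle into the number of
lattice points `(m, n)`, `m, n ≥ 1`, in the quarter ellipse with semi-axes `A = w√λ/π`,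
`B = h√λ/π`. Column `m` contains `⌊B √(1 - (m/A)²)⌋` of them, and comparing the sum of the
decreasing profile `t ↦ √(1 - (t/A)²)` over `m = 1, …, ⌊A⌋` with its integral `πA/4` gives at
least `πAB/4 - A - B` points. Summing over the rectangles gives the bound.
-/

open Real Finset

lemma integral_sqrt_one_sub_sq_zero_one : ∫ t in (0 : ℝ)..1, √(1 - t ^ 2) = π / 4 := by
  have hcont : Continuous fun t : ℝ => √(1 - t ^ 2) := by fun_prop
  have hsymm : ∫ t in (-1 : ℝ)..0, √(1 - t ^ 2) = ∫ t in (0 : ℝ)..1, √(1 - t ^ 2) := by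
    have := intervalIntegral.integral_comp_neg (a := (0 : ℝ)) (b := 1) fun t => √(1 - t ^ 2)
    simp only [neg_sq, neg_zero] at this
    exact this.symm
  have hsplit := intervalIntegral.integral_add_adjacent_intervals
    (hcont.intervalIntegrable (μ := MeasureTheory.volume) (-1) 0) (hcont.intervalIntegrable 0 1)
  rw [integral_sqrt_one_sub_sq, hsymm] at hsplit
  linarith

lemma integral_sqrt_one_sub_div_sq {A : ℝ} (hA : 0 < A) :
    ∫ t in (0 : ℝ)..A, √(1 - (t / A) ^ 2) = π / 4 * A := by
  rw [intervalIntegral.integral_comp_div (fun u => √(1 - u ^ 2)) hA.ne', zero_div,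
    div_self hA.ne', integral_sqrt_one_sub_sq_zero_one, smul_eq_mul, mul_comm]

lemma antitoneOn_sqrt_one_sub_div_sq {A : ℝ} (hA : 0 < A) :
    AntitoneOn (fun t => √(1 - (t / A) ^ 2)) (Set.Ici 0) := by
  intro s hs t _ hst
  have : s / A ≤ t / A := by gcongr
  have : 0 ≤ s / A := div_nonneg hs hA.le
  exact Real.sqrt_le_sqrt (by nlinarith)

lemma sum_sqrt_one_sub_div_sq_ge {A : ℝ} (hA : 0 < A) :
    π / 4 * A - 1 ≤ ∑ i ∈ range ⌊A⌋₊, √(1 - ((i + 1 : ℕ) / A) ^ 2) := by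
  set M := ⌊A⌋₊
  have hmono : ∫ t in (0 : ℝ)..A, √(1 - (t / A) ^ 2)
      ≤ ∫ t in (0 : ℝ)..0 + ((M + 1 : ℕ) : ℝ), √(1 - (t / A) ^ 2) := by
    refine intervalIntegral.integral_mono_interval le_rfl hA.le ?_
      (Filter.Eventually.of_forall fun t => Real.sqrt_nonneg _)
      (Continuous.intervalIntegrable (by fun_prop) _ _)
    push_cast
    linarith [Nat.lt_floor_add_one A]
  have hsum := ((antitoneOn_sqrt_one_sub_div_sq hA).mono
    Set.Icc_subset_Ici_self).integral_le_sum (x₀ := 0) (a := M + 1)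
  rw [integral_sqrt_one_sub_div_sq hA] at hmono
  -- the integral over `[0, 1]` is bounded by the `i = 0` term `√1 = 1` of the upper sum
  rw [sum_range_succ'] at hsum
  simp only [zero_add, Nat.cast_zero, zero_div, sq, mul_zero, sub_zero, Real.sqrt_one] at hsum
  simp only [zero_add, sq] at hmono ⊢
  linarith

def quarterEllipseLatticePoints (A B : ℝ) : Set (ℕ × ℕ) :=
  {p | 0 < p.1 ∧ 0 < p.2 ∧ (p.1 : ℝ) ^ 2 / A ^ 2 + (p.2 : ℝ) ^ 2 / B ^ 2 ≤ 1}

lemma quarterEllipseLatticePoints_finite {A B : ℝ} (hA : 0 < A) (hB : 0 < B) :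
    (quarterEllipseLatticePoints A B).Finite := by
  refine (Set.finite_Iic (⌊A⌋₊, ⌊B⌋₊)).subset fun p ⟨_, _, hp⟩ => ?_
  have h1 : (p.1 : ℝ) ^ 2 ≤ A ^ 2 := by
    have := div_nonneg (sq_nonneg (p.2 : ℝ)) (sq_nonneg B)
    rw [← div_le_one (by positivity)]; linarith
  have h2 : (p.2 : ℝ) ^ 2 ≤ B ^ 2 := by
    have := div_nonneg (sq_nonneg (p.1 : ℝ)) (sq_nonneg A)
    rw [← div_le_one (by positivity)]; linarith
  exact ⟨Nat.le_floor (abs_le_of_sq_le_sq' h1 hA.le).2,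
    Nat.le_floor (abs_le_of_sq_le_sq' h2 hB.le).2⟩

lemma mem_quarterEllipseLatticePoints_of_le {A B : ℝ} (hB : 0 < B) {m n : ℕ} (hm : 0 < m)
    (hn : 0 < n) (hle : (n : ℝ) ≤ B * √(1 - (m / A) ^ 2)) :
    (m, n) ∈ quarterEllipseLatticePoints A B := by
  have hn' : (0 : ℝ) < n := by exact_mod_cast hn
  have hpos : 0 < 1 - ((m : ℝ) / A) ^ 2 :=
    Real.sqrt_pos.1 (pos_of_mul_pos_right (hn'.trans_le hle) hB.le)
  have hsq : (n : ℝ) ^ 2 ≤ B ^ 2 * (1 - (m / A) ^ 2) := by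
    calc (n : ℝ) ^ 2 ≤ (B * √(1 - (m / A) ^ 2)) ^ 2 := pow_le_pow_left₀ hn'.le hle 2
      _ = B ^ 2 * (1 - (m / A) ^ 2) := by rw [mul_pow, Real.sq_sqrt hpos.le]
  refine ⟨hm, hn, ?_⟩
  show (m : ℝ) ^ 2 / A ^ 2 + (n : ℝ) ^ 2 / B ^ 2 ≤ 1
  rw [← div_pow, ← le_sub_iff_add_le', div_le_iff₀ (by positivity)]
  linarith

lemma card_quarterEllipseLatticePoints_ge {A B : ℝ} (hA : 0 < A) (hB : 0 < B) :
    π / 4 * A * B - A - B ≤ Nat.card (quarterEllipseLatticePoints A B) := by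
  set M := ⌊A⌋₊
  set column : ℕ → ℕ := fun m => ⌊B * √(1 - (m / A) ^ 2)⌋₊
  set U := (range M).biUnion fun i => {i + 1} ×ˢ Icc 1 (column (i + 1))
  have hUsub : (U : Set (ℕ × ℕ)) ⊆ quarterEllipseLatticePoints A B := by
    rintro ⟨m, n⟩ hp
    simp only [U, coe_biUnion, coe_product, coe_singleton, coe_Icc, Set.mem_iUnion,
      Set.mem_prod, Set.mem_singleton_iff, Set.mem_Icc] at hp
    obtain ⟨i, -, rfl, hn, hnle⟩ := hp
    refine mem_quarterEllipseLatticePoints_of_le hB i.succ_pos hn ?_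
    exact (Nat.cast_le.2 hnle).trans (Nat.floor_le (by positivity))
  have hUcard : U.card = ∑ i ∈ range M, column (i + 1) := by
    rw [card_biUnion]
    · simp
    · intro i _ j _ hij
      simp only [disjoint_left, mem_product, mem_singleton]
      rintro p ⟨hpi, -⟩ ⟨hpj, -⟩
      omega
  calc π / 4 * A * B - A - B ≤ B * (π / 4 * A - 1) - M := by
        nlinarith [Nat.floor_le hA.le]
    _ ≤ B * ∑ i ∈ range M, √(1 - ((i + 1 : ℕ) / A) ^ 2) - M := by
        gcongr; exact sum_sqrt_one_sub_div_sq_ge hA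
    _ = ∑ i ∈ range M, (B * √(1 - ((i + 1 : ℕ) / A) ^ 2) - 1) := by
        simp [sum_sub_distrib, mul_sum]
    _ ≤ ∑ i ∈ range M, (column (i + 1) : ℝ) :=
        sum_le_sum fun i _ => (Nat.sub_one_lt_floor _).le
    _ = U.card := by rw [hUcard]; push_cast; rfl
    _ ≤ Nat.card (quarterEllipseLatticePoints A B) := by
        rw [Nat.card_coe_set_eq, ← Set.ncard_coe_finset]
        exact_mod_cast Set.ncard_le_ncard hUsub (quarterEllipseLatticePoints_finite hA hB)

/-- `D(λ, Q)` for a single `w × h` rectangle `Q`. -/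
noncomputable def rectangleEigenvalueCount (w h lam : ℝ) : ℕ :=
  Nat.card {p : ℕ × ℕ // 0 < p.1 ∧ 0 < p.2 ∧
    π ^ 2 * ((p.1 : ℝ) ^ 2 / w ^ 2 + (p.2 : ℝ) ^ 2 / h ^ 2) ≤ lam}

lemma rectangleEigenvalueCount_eq {w h lam : ℝ} (hw : 0 < w) (hh : 0 < h) (hlam : 0 < lam) :
    rectangleEigenvalueCount w h lam =
      Nat.card (quarterEllipseLatticePoints (w * √lam / π) (h * √lam / π)) := by
  refine Nat.card_congr (Equiv.subtypeEquivRight fun p => ?_)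
  have hscale : (p.1 : ℝ) ^ 2 / (w * √lam / π) ^ 2 + (p.2 : ℝ) ^ 2 / (h * √lam / π) ^ 2
      = π ^ 2 * ((p.1 : ℝ) ^ 2 / w ^ 2 + (p.2 : ℝ) ^ 2 / h ^ 2) / lam := by
    simp only [div_pow, mul_pow, Real.sq_sqrt hlam.le]
    field_simp
  simp only [quarterEllipseLatticePoints, Set.mem_ofPred_eq, hscale, div_le_one hlam]

lemma rectangleEigenvalueCount_ge {w h lam : ℝ} (hw : 0 < w) (hh : 0 < h) (hlam : 0 < lam) :
    w * h - 4 * (w + h) / √lam ≤ 4 * π * rectangleEigenvalueCount w h lam / lam := by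
  have hs : 0 < √lam := Real.sqrt_pos.2 hlam
  have hcount := card_quarterEllipseLatticePoints_ge (div_pos (mul_pos hw hs) pi_pos)
    (div_pos (mul_pos hh hs) pi_pos)
  rw [← rectangleEigenvalueCount_eq hw hh hlam] at hcount
  rw [le_div_iff₀ hlam]
  have hsq : √lam ^ 2 = lam := Real.sq_sqrt hlam.le
  calc (w * h - 4 * (w + h) / √lam) * lam
      = 4 * π * (π / 4 * (w * √lam / π) * (h * √lam / π) - w * √lam / π - h * √lam / π) := by
        field_simp
        linear_combination (4 * (w + h) - w * h * √lam) * hsq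
    _ ≤ 4 * π * rectangleEigenvalueCount w h lam := by gcongr

theorem stmt_2_general (N : ℕ) (w h : Fin N → ℝ)
    (hw : ∀ i, 0 < w i) (hh : ∀ i, 0 < h i)
    (lam : ℝ) (hlam : 0 < lam) :
    4 * π * (∑ i, (Nat.card {p : ℕ × ℕ // 0 < p.1 ∧ 0 < p.2 ∧
        π^2 * ((p.1:ℝ)^2/(w i)^2 + (p.2:ℝ)^2/(h i)^2) ≤ lam} : ℝ)) / lam
      ≥ (∑ i, w i * h i) - 2 * (∑ i, 2*(w i + h i)) / Real.sqrt lam := by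
  calc (∑ i, w i * h i) - 2 * (∑ i, 2 * (w i + h i)) / √lam
      = ∑ i, (w i * h i - 4 * (w i + h i) / √lam) := by
        rw [sum_sub_distrib, ← sum_div, mul_sum]
        congr 2
        exact sum_congr rfl fun i _ => by ring
    _ ≤ ∑ i, 4 * π * rectangleEigenvalueCount (w i) (h i) lam / lam :=
        sum_le_sum fun i _ => rectangleEigenvalueCount_ge (hw i) (hh i) hlam
    _ = _ := by rw [mul_sum, sum_div]; rfl

/-- Dirichlet eigenvalue counting lower bound for a disjoint union of
axis-parallel rectangles `Q_i = [x i, x i + w i] × [y i, y i + h i]`. -/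
theorem stmt_2 (N : ℕ) (x y w h : Fin N → ℝ)
    (hw : ∀ i, 0 < w i) (hh : ∀ i, 0 < h i)
    (hdisj : ∀ i j : Fin N, i ≠ j →
      Disjoint ((Set.Icc (x i) (x i + w i)) ×ˢ (Set.Icc (y i) (y i + h i)))
        ((Set.Icc (x j) (x j + w j)) ×ˢ (Set.Icc (y j) (y j + h j))))
    (lam : ℝ) (hlam : 0 < lam) :
    4 * π * (∑ i, (Nat.card {p : ℕ × ℕ // 0 < p.1 ∧ 0 < p.2 ∧
        π^2 * ((p.1:ℝ)^2/(w i)^2 + (p.2:ℝ)^2/(h i)^2) ≤ lam} : ℝ)) / lam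
      ≥ (∑ i, w i * h i) - 2 * (∑ i, 2*(w i + h i)) / Real.sqrt lam :=
  stmt_2_general N w h hw hh lam hlam
end

section
/- Let α : [0,1] → ℝ², α = (F, G), be Lipschitz with |α'(t)| ≤ L for almost every t, where L > 0, and with F(t) > 0 for all t. Then there exists a Lipschitz function H : [0,1] → ℝ with H(0) = G(0), H(1) = G(1), |H'(t)| ≥ |G'(t)| and F'(t)² + H'(t)² = L² for almost every t. -/
open Real MeasureTheory
open intervalIntegral Filter Topology Set Metric


lemma lip_ftc {K : NNReal} {G : ℝ → ℝ} (hG : LipschitzWith K G) :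
    ∫ t in (0:ℝ)..1, deriv G t = G 1 - G 0 := by
  set g : ℕ → ℝ → ℝ := fun n t => (G (t + (n+1:ℝ)⁻¹) - G t) * (n+1:ℝ) with hg
  have hGc : Continuous G := hG.continuous
  have hpos : ∀ n : ℕ, (0:ℝ) < (n+1:ℝ)⁻¹ := fun n => by positivity
  have hint : ∀ a b : ℝ, IntervalIntegrable G volume a b := fun a b =>
    (hGc.intervalIntegrable a b)
  -- a.e. convergence
  have hae : ∀ᵐ t : ℝ, Tendsto (fun n => g n t) atTop (𝓝 (deriv G t)) := by
    filter_upwards [hG.ae_differentiableAt_of_real] with t ht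
    have hd : HasDerivAt G (deriv G t) t := ht.hasDerivAt
    rw [hasDerivAt_iff_tendsto_slope] at hd
    have hseq : Tendsto (fun n : ℕ => t + (n+1:ℝ)⁻¹) atTop (𝓝[≠] t) := by
      apply tendsto_nhdsWithin_of_tendsto_nhds_of_eventually_within
      · simpa using (tendsto_one_div_add_atTop_nhds_zero_nat).const_add t |>.congr
          (fun n => by rw [one_div])
      · exact Eventually.of_forall fun n => by
          simp [Set.mem_compl_iff, (hpos n).ne']
    have := hd.comp hseq
    refine this.congr fun n => ?_
    simp only [Function.comp, slope_def_field, add_sub_cancel_left, div_inv_eq_mul]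
    rfl
  -- integral computation
  have key : ∀ n : ℕ, ∫ t in (0:ℝ)..1, g n t =
      ((∫ t in (1:ℝ)..(1 + (n+1:ℝ)⁻¹), G t) - ∫ t in (0:ℝ)..((n+1:ℝ)⁻¹), G t) * (n+1:ℝ) := by
    intro n
    set h := ((n:ℝ)+1)⁻¹
    have h1 : ∫ t in (0:ℝ)..1, G (t + h) = ∫ t in (0+h:ℝ)..(1+h), G t := by
      simpa using intervalIntegral.integral_comp_add_right (a := (0:ℝ)) (b := 1) (f := G) h
    have hsplit1 : ∫ t in (h:ℝ)..(1+h), G t =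
        (∫ t in (h:ℝ)..1, G t) + ∫ t in (1:ℝ)..(1+h), G t :=
      (intervalIntegral.integral_add_adjacent_intervals (hint h 1) (hint 1 (1+h))).symm
    have hsplit2 : ∫ t in (0:ℝ)..1, G t =
        (∫ t in (0:ℝ)..h, G t) + ∫ t in (h:ℝ)..1, G t :=
      (intervalIntegral.integral_add_adjacent_intervals (hint 0 h) (hint h 1)).symm
    have : ∫ t in (0:ℝ)..1, g n t =
        ((∫ t in (0:ℝ)..1, G (t + h)) - ∫ t in (0:ℝ)..1, G t) * ((n:ℝ)+1) := by
      rw [hg]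
      rw [intervalIntegral.integral_mul_const, intervalIntegral.integral_sub]
      · exact (hGc.comp (continuous_id.add continuous_const)).intervalIntegrable 0 1
      · exact hint 0 1
    rw [this, h1, zero_add, hsplit1, hsplit2]
    push_cast
    ring
  -- limit of the right-hand side
  have hlim : Tendsto (fun n => ∫ t in (0:ℝ)..1, g n t) atTop (𝓝 (G 1 - G 0)) := by
    have hd1 : HasDerivAt (fun u => ∫ t in (1:ℝ)..u, G t) (G 1) 1 :=
      intervalIntegral.integral_hasDerivAt_right (hint 1 1)
        (hGc.stronglyMeasurableAtFilter _ _) hGc.continuousAt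
    have hd0 : HasDerivAt (fun u => ∫ t in (0:ℝ)..u, G t) (G 0) 0 :=
      intervalIntegral.integral_hasDerivAt_right (hint 0 0)
        (hGc.stronglyMeasurableAtFilter _ _) hGc.continuousAt
    rw [hasDerivAt_iff_tendsto_slope] at hd1 hd0
    have hseq1 : Tendsto (fun n : ℕ => 1 + (n+1:ℝ)⁻¹) atTop (𝓝[≠] 1) := by
      apply tendsto_nhdsWithin_of_tendsto_nhds_of_eventually_within
      · simpa using (tendsto_one_div_add_atTop_nhds_zero_nat (𝕜 := ℝ)).const_add 1 |>.congr
          (fun n => by rw [one_div])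
      · exact Eventually.of_forall fun n => by simp [(hpos n).ne']
    have hseq0 : Tendsto (fun n : ℕ => ((n:ℝ)+1)⁻¹) atTop (𝓝[≠] 0) := by
      apply tendsto_nhdsWithin_of_tendsto_nhds_of_eventually_within
      · simpa using (tendsto_one_div_add_atTop_nhds_zero_nat).congr
          (fun n => by rw [one_div])
      · exact Eventually.of_forall fun n => by simp [(hpos n).ne']
    have t1 := hd1.comp hseq1
    have t0 := hd0.comp hseq0
    have := t1.sub t0
    rw [show G 1 - G 0 = G 1 - G 0 by rfl] at this
    refine Tendsto.congr ?_ this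
    intro n
    rw [key n]
    simp only [Function.comp, slope_def_field]
    rw [intervalIntegral.integral_same, intervalIntegral.integral_same]
    field_simp
    ring
  -- dominated convergence
  have hdct : Tendsto (fun n => ∫ t in (0:ℝ)..1, g n t) atTop
      (𝓝 (∫ t in (0:ℝ)..1, deriv G t)) := by
    apply intervalIntegral.tendsto_integral_filter_of_dominated_convergence
      (fun _ => (K:ℝ))
    · exact Eventually.of_forall fun n =>
        ((hGc.comp (continuous_id.add continuous_const)).sub hGc).mul
          continuous_const |>.aestronglyMeasurable
    · refine Eventually.of_forall fun n => ?_
      refine Eventually.of_forall fun t _ => ?_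
      have := hG.dist_le_mul (t + (n+1:ℝ)⁻¹) t
      simp only [Real.dist_eq, add_sub_cancel_left] at this
      rw [hg]
      simp only [Real.norm_eq_abs, abs_mul]
      rw [abs_of_pos (by positivity : (0:ℝ) < (n:ℝ)+1)]
      calc |G (t + (n+1:ℝ)⁻¹) - G t| * ((n:ℝ)+1)
          ≤ ((K:ℝ) * |(n+1:ℝ)⁻¹|) * ((n:ℝ)+1) := by
            apply mul_le_mul_of_nonneg_right this (by positivity)
        _ = (K:ℝ) := by
            rw [abs_of_pos (hpos n)]
            field_simp
    · exact intervalIntegrable_const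
    · exact hae.mono fun t h _ => h
  exact tendsto_nhds_unique hdct hlim


lemma ae_hasDerivAt_primitive {g : ℝ → ℝ} (hm : Measurable g) {C : ℝ}
    (hb : ∀ t, |g t| ≤ C) :
    ∀ᵐ x : ℝ, HasDerivAt (fun t => ∫ u in (0:ℝ)..t, g u) (g x) x := by
  have hsm : StronglyMeasurable g := hm.stronglyMeasurable
  have hintOn : ∀ s : Set ℝ, volume s < ⊤ → IntegrableOn g s := fun s hs =>
    Measure.integrableOn_of_bounded hs.ne hsm.aestronglyMeasurable
      (Eventually.of_forall fun t => by simpa using hb t)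
  have hloc : LocallyIntegrable g volume := by
    intro x
    refine ⟨closedBall x 1, closedBall_mem_nhds x one_pos, hintOn _ ?_⟩
    rw [Real.volume_closedBall]; exact ENNReal.ofReal_lt_top
  have hint : ∀ a b : ℝ, IntervalIntegrable g volume a b := fun a b =>
    (hintOn _ isCompact_uIcc.measure_lt_top).intervalIntegrable
  filter_upwards [IsUnifLocDoublingMeasure.ae_tendsto_average_norm_sub (μ := volume) hloc 1]
    with x hx
  have hA : Tendsto (fun y : ℝ => ⨍ u in closedBall x |y - x|, |g u - g x|)
      (𝓝[≠] x) (𝓝 0) := by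
    apply hx (fun _ => x) (fun y => |y - x|)
    · rw [tendsto_nhdsWithin_iff]
      constructor
      · have : Tendsto (fun y : ℝ => y - x) (𝓝[≠] x) (𝓝 0) :=
          ((continuous_id.sub continuous_const).tendsto' x 0 (by simp)).mono_left
            nhdsWithin_le_nhds
        simpa using this.abs
      · exact eventually_mem_nhdsWithin.mono fun y hy => by
          simpa [abs_pos, sub_ne_zero] using hy
    · exact Eventually.of_forall fun y => by simp [mem_closedBall, dist_self]
  rw [hasDerivAt_iff_tendsto_slope]
  rw [show 𝓝 (g x) = 𝓝 (0 + g x) by rw [zero_add]]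
  have hslope : ∀ y : ℝ, y ≠ x →
      |slope (fun t => ∫ u in (0:ℝ)..t, g u) x y - g x| ≤
        2 * ⨍ u in closedBall x |y - x|, |g u - g x| := by
    intro y hy
    have hxy : (0:ℝ) < |y - x| := by rwa [abs_pos, sub_ne_zero]
    have hprim : (∫ u in (0:ℝ)..y, g u) - ∫ u in (0:ℝ)..x, g u = ∫ u in x..y, g u := by
      rw [← intervalIntegral.integral_add_adjacent_intervals (hint 0 x) (hint x y)]
      ring
    have hconst : ∫ _ in x..y, g x = (y - x) * g x := by simp [mul_comm]
    have hsl : slope (fun t => ∫ u in (0:ℝ)..t, g u) x y - g x =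
        (∫ u in x..y, (g u - g x)) / (y - x) := by
      rw [slope_def_field, intervalIntegral.integral_sub (hint x y)
        intervalIntegrable_const, hconst, ← hprim]
      have hyx : y - x ≠ 0 := sub_ne_zero.2 hy
      field_simp
    rw [hsl, abs_div]
    rw [div_le_iff₀ hxy]
    have hsub : Set.uIoc x y ⊆ closedBall x |y - x| := by
      intro u hu
      rw [mem_closedBall, Real.dist_eq]
      rcases le_or_gt x y with h | h
      · rw [uIoc_of_le h] at hu
        rw [abs_of_nonneg (sub_nonneg.2 h)]
        rw [abs_le]; constructor <;> nlinarith [hu.1, hu.2]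
      · rw [uIoc_of_ge h.le] at hu
        rw [abs_of_nonpos (sub_nonpos.2 h.le), abs_le]
        constructor <;> nlinarith [hu.1, hu.2]
    have hball : volume (closedBall x |y - x|) < ⊤ := by
      rw [Real.volume_closedBall]; exact ENNReal.ofReal_lt_top
    have hib : IntegrableOn (fun u => |g u - g x|) (closedBall x |y - x|) volume := by
      apply Measure.integrableOn_of_bounded hball.ne
      · exact ((hm.sub measurable_const).abs).aestronglyMeasurable
      · exact Eventually.of_forall fun t => by
          simp only [Real.norm_eq_abs, abs_abs]
          calc |g t - g x| ≤ |g t| + |g x| := abs_sub _ _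
            _ ≤ C + C := add_le_add (hb t) (hb x)
    calc |∫ u in x..y, (g u - g x)| ≤ ∫ u in Set.uIoc x y, |g u - g x| := by
          simpa using intervalIntegral.norm_integral_le_integral_norm_uIoc
            (f := fun u => g u - g x) (a := x) (b := y) (μ := volume)
      _ ≤ ∫ u in closedBall x |y - x|, |g u - g x| :=
          setIntegral_mono_set hib (Eventually.of_forall fun u => abs_nonneg _)
            (HasSubset.Subset.eventuallyLE hsub)
      _ = (volume (closedBall x |y - x|)).toReal *
            ⨍ u in closedBall x |y - x|, |g u - g x| := by
          rw [← measure_smul_setAverage (μ := volume) _ hball.ne, smul_eq_mul]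
          rfl
      _ = 2 * |y - x| * ⨍ u in closedBall x |y - x|, |g u - g x| := by
          rw [Real.volume_closedBall, ENNReal.toReal_ofReal (by positivity)]
      _ = 2 * (⨍ u in closedBall x |y - x|, |g u - g x|) * |y - x| := by ring
  have h2A : Tendsto (fun y : ℝ => 2 * ⨍ u in closedBall x |y - x|, |g u - g x|)
      (𝓝[≠] x) (𝓝 0) := by simpa using hA.const_mul 2
  have hsq : Tendsto (fun y => slope (fun t => ∫ u in (0:ℝ)..t, g u) x y - g x)
      (𝓝[≠] x) (𝓝 0) := by
    apply squeeze_zero_norm' _ h2A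
    exact eventually_mem_nhdsWithin.mono fun y hy => by
      simpa using hslope y (by simpa using hy)
  simpa using hsq.add_const (g x)

lemma bdd_intervalIntegrable {g : ℝ → ℝ} (hm : Measurable g) {C : ℝ}
    (hb : ∀ t, |g t| ≤ C) (a b : ℝ) : IntervalIntegrable g volume a b := by
  refine (Measure.integrableOn_of_bounded (M := C) isCompact_uIcc.measure_lt_top.ne
    hm.aestronglyMeasurable ?_).intervalIntegrable
  exact Eventually.of_forall fun t => by simpa using hb t

/-- stretching the second coordinate to obtain a constant speed `L` curve
with the same endpoint values of the second coordinate. -/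
theorem stmt_7 (L : ℝ) (hL : 0 < L) (F G : ℝ → ℝ) (KF KG : NNReal)
    (hF : LipschitzWith KF F) (hG : LipschitzWith KG G)
    (hFpos : ∀ t ∈ Set.Icc (0:ℝ) 1, 0 < F t)
    (hspeed : ∀ᵐ t ∂(volume.restrict (Set.Icc (0:ℝ) 1)),
      (deriv F t)^2 + (deriv G t)^2 ≤ L^2) :
    ∃ H : ℝ → ℝ, LipschitzWith (Real.toNNReal L) H ∧ H 0 = G 0 ∧ H 1 = G 1 ∧
      ∀ᵐ t ∂(volume.restrict (Set.Icc (0:ℝ) 1)),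
        |deriv G t| ≤ |deriv H t| ∧ (deriv F t)^2 + (deriv H t)^2 = L^2 := by
  set h : ℝ → ℝ := fun t => Real.sqrt (L^2 - (deriv F t)^2) with hh
  have hmh : Measurable h :=
    (measurable_const.sub ((measurable_deriv F).pow_const 2)).sqrt
  have h0 : ∀ t, 0 ≤ h t := fun t => Real.sqrt_nonneg _
  have hL' : ∀ t, h t ≤ L := fun t => by
    rw [hh]
    calc Real.sqrt (L^2 - (deriv F t)^2) ≤ Real.sqrt (L^2) :=
          Real.sqrt_le_sqrt (by nlinarith [sq_nonneg (deriv F t)])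
      _ = L := Real.sqrt_sq hL.le
  have hba : ∀ t, |h t| ≤ L := fun t => by
    rw [abs_of_nonneg (h0 t)]; exact hL' t
  have hinth : ∀ a b : ℝ, IntervalIntegrable h volume a b :=
    bdd_intervalIntegrable hmh hba
  set I : ℝ := ∫ t in (0:ℝ)..1, h t with hI
  -- |G 1 - G 0| ≤ I
  have hGh : ∀ᵐ t ∂(volume.restrict (Set.Icc (0:ℝ) 1)), |deriv G t| ≤ h t := by
    filter_upwards [hspeed] with t ht
    rw [hh, ← Real.sqrt_sq_eq_abs]
    exact Real.sqrt_le_sqrt (by nlinarith)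
  have hGK : ∀ t, |deriv G t| ≤ (KG : ℝ) := fun t => by
    simpa using norm_deriv_le_of_lipschitz (𝕜 := ℝ) hG (x₀ := t)
  have hintG : ∀ a b : ℝ, IntervalIntegrable (fun t => |deriv G t|) volume a b :=
    bdd_intervalIntegrable (measurable_deriv G).abs (fun t => by
      simpa [abs_abs] using hGK t)
  have hGI : |G 1 - G 0| ≤ I := by
    rw [← lip_ftc hG]
    calc |∫ t in (0:ℝ)..1, deriv G t| ≤ ∫ t in (0:ℝ)..1, |deriv G t| := by
          simpa using intervalIntegral.abs_integral_le_integral_abs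
            (f := fun t => deriv G t) (a := 0) (b := 1) zero_le_one
      _ ≤ I := by
          refine intervalIntegral.integral_mono_ae_restrict zero_le_one
            (hintG 0 1) (hinth 0 1) ?_
          exact hGh
  -- find the splitting point by IVT
  set φ : ℝ → ℝ := fun s => 2 * (∫ t in (0:ℝ)..s, h t) - I with hφ
  have hφc : Continuous φ := by
    exact (continuous_const.mul (intervalIntegral.continuous_primitive hinth 0)).sub
      continuous_const
  have hφ0 : φ 0 = -I := by simp [hφ]
  have hφ1 : φ 1 = I := by simp [hφ, ← hI]; ring
  have hmem : G 1 - G 0 ∈ Set.Icc (φ 0) (φ 1) := by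
    rw [hφ0, hφ1]
    exact ⟨(abs_le.mp hGI).1, (abs_le.mp hGI).2⟩
  obtain ⟨s, hs, hφs⟩ := intermediate_value_Icc zero_le_one hφc.continuousOn hmem
  -- the stretched function
  set gs : ℝ → ℝ := fun t => if t ≤ s then h t else -h t with hgs
  have hmgs : Measurable gs := Measurable.ite measurableSet_Iic hmh hmh.neg
  have habs : ∀ t, |gs t| = h t := fun t => by
    rw [hgs]; dsimp only
    split <;> simp [abs_of_nonneg (h0 t)]
  have hbgs : ∀ t, |gs t| ≤ L := fun t => by rw [habs]; exact hL' t
  have hintgs : ∀ a b : ℝ, IntervalIntegrable gs volume a b :=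
    bdd_intervalIntegrable hmgs hbgs
  refine ⟨fun t => G 0 + ∫ u in (0:ℝ)..t, gs u, ?_, by simp, ?_, ?_⟩
  · -- Lipschitz
    apply LipschitzWith.of_dist_le_mul
    intro x y
    have hd : (G 0 + ∫ u in (0:ℝ)..x, gs u) - (G 0 + ∫ u in (0:ℝ)..y, gs u) =
        ∫ u in y..x, gs u := by
      rw [← intervalIntegral.integral_add_adjacent_intervals (hintgs 0 y) (hintgs y x)]
      ring
    rw [Real.dist_eq, Real.dist_eq, hd, Real.coe_toNNReal _ hL.le]
    have := intervalIntegral.norm_integral_le_of_norm_le_const (C := L) (f := gs)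
      (a := y) (b := x) (fun u _ => by simpa using hbgs u)
    simpa [Real.norm_eq_abs] using this
  · -- H 1 = G 1
    show G 0 + (∫ u in (0:ℝ)..1, gs u) = G 1
    have e1 : ∫ u in (0:ℝ)..s, gs u = ∫ u in (0:ℝ)..s, h u := by
      apply intervalIntegral.integral_congr
      intro t ht
      rw [Set.uIcc_of_le hs.1] at ht
      exact if_pos ht.2
    have e2 : ∫ u in s..1, gs u = ∫ u in s..1, -h u := by
      apply intervalIntegral.integral_congr_ae
      refine Eventually.of_forall fun t ht => ?_
      rw [Set.uIoc_of_le hs.2] at ht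
      exact if_neg (not_le.2 ht.1)
    have esplit : ∫ u in (0:ℝ)..1, gs u =
        (∫ u in (0:ℝ)..s, gs u) + ∫ u in s..1, gs u :=
      (intervalIntegral.integral_add_adjacent_intervals (hintgs 0 s) (hintgs s 1)).symm
    have hIsplit : (∫ u in (0:ℝ)..s, h u) + ∫ u in s..1, h u = I :=
      intervalIntegral.integral_add_adjacent_intervals (hinth 0 s) (hinth s 1)
    have : ∫ u in (0:ℝ)..1, gs u = G 1 - G 0 := by
      rw [esplit, e1, e2, intervalIntegral.integral_neg, ← hφs, hφ]
      dsimp only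
      linarith [hIsplit]
    rw [this]; ring
  · -- a.e. properties
    have hder : ∀ᵐ x : ℝ, deriv (fun t => G 0 + ∫ u in (0:ℝ)..t, gs u) x = gs x := by
      filter_upwards [ae_hasDerivAt_primitive hmgs hbgs] with x hx
      exact (hx.const_add (G 0)).deriv
    filter_upwards [hspeed, ae_restrict_of_ae hder] with t h1 h2
    have hf2 : (deriv F t)^2 ≤ L^2 := by nlinarith [sq_nonneg (deriv G t)]
    have hsq : h t ^ 2 = L^2 - (deriv F t)^2 := Real.sq_sqrt (by linarith)
    have habsH : |deriv (fun t => G 0 + ∫ u in (0:ℝ)..t, gs u) t| = h t := by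
      rw [h2, habs]
    constructor
    · rw [habsH, ← Real.sqrt_sq_eq_abs]
      exact Real.sqrt_le_sqrt (by nlinarith)
    · have : (deriv (fun t => G 0 + ∫ u in (0:ℝ)..t, gs u) t)^2 = h t ^ 2 := by
        rw [← sq_abs, habsH]
      rw [this, hsq]; ring
end

section
/- Let a, h > 0. For every positive integer j, the j-th Dirichlet eigenvalue of the flat cylinder of radius a and height h is at most the j-th Dirichlet eigenvalue of the rectangle of width 2πa and height h. Concretely: the nondecreasing rearrangement of {k²/a² + n²π²/h² : k ∈ ℤ, n ≥ 1} is termwise at most the nondecreasing rearrangement of {m²π²/(2πa)² + n²π²/h² : m ≥ 1, n ≥ 1}. -/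
open Real

/-- The `j`-th Dirichlet eigenvalue (counted with multiplicity, `1`-indexed) of the flat
cylinder of radius `a` and height `h`. -/
noncomputable def cylEV (a h : ℝ) (j : ℕ) : ℝ :=
  sInf {lam : ℝ | j ≤ Nat.card {p : ℤ × ℕ // 0 < p.2 ∧
    (p.1:ℝ)^2/a^2 + (p.2:ℝ)^2*π^2/h^2 ≤ lam}}

/-- The `j`-th Dirichlet eigenvalue (counted with multiplicity, `1`-indexed) of the
`w × h` rectangle. -/
noncomputable def rectEV (w h : ℝ) (j : ℕ) : ℝ :=
  sInf {lam : ℝ | j ≤ Nat.card {p : ℕ × ℕ // 0 < p.1 ∧ 0 < p.2 ∧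
    π^2 * ((p.1:ℝ)^2/w^2 + (p.2:ℝ)^2/h^2) ≤ lam}}

/-- The map `m ↦ k` sending `1,2,3,4,5,...` to `0,1,-1,2,-2,...`. -/
def foldMap (m : ℕ) : ℤ := if m % 2 = 0 then (m / 2 : ℕ) else -((m / 2 : ℕ) : ℤ)

lemma foldMap_sq_le (m : ℕ) : 4 * (foldMap m)^2 ≤ (m : ℤ)^2 := by
  have h2 : (2 : ℤ) * ((m / 2 : ℕ) : ℤ) ≤ (m : ℤ) := by
    have := Nat.div_mul_le_self m 2
    omega
  have hnn : (0:ℤ) ≤ ((m / 2 : ℕ) : ℤ) := Int.natCast_nonneg _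
  have hsq : (foldMap m)^2 = ((m / 2 : ℕ) : ℤ)^2 := by
    unfold foldMap; split <;> ring
  rw [hsq]
  nlinarith [Int.natCast_nonneg m]

lemma foldMap_inj {m₁ m₂ : ℕ} (h₁ : 0 < m₁) (h₂ : 0 < m₂)
    (h : foldMap m₁ = foldMap m₂) : m₁ = m₂ := by
  unfold foldMap at h
  split at h <;> split at h <;> omega

lemma cyl_finite (a h lam : ℝ) (ha : 0 < a) (hh : 0 < h) :
    {p : ℤ × ℕ | 0 < p.2 ∧ (p.1:ℝ)^2/a^2 + (p.2:ℝ)^2*π^2/h^2 ≤ lam}.Finite := by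
  have hπ : (0:ℝ) < π := Real.pi_pos
  apply Set.Finite.subset (Set.finite_Icc ((-(⌈lam*a^2⌉₊:ℤ), 1) : ℤ × ℕ)
    ((⌈lam*a^2⌉₊:ℤ), ⌈lam*h^2/π^2⌉₊))
  rintro ⟨k, n⟩ ⟨hn, hle⟩
  have hk2 : (k:ℝ)^2/a^2 ≤ lam := by
    have : (0:ℝ) ≤ (n:ℝ)^2*π^2/h^2 := by positivity
    linarith
  have hn2 : (n:ℝ)^2*π^2/h^2 ≤ lam := by
    have : (0:ℝ) ≤ (k:ℝ)^2/a^2 := by positivity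
    linarith
  have hk3 : ((k^2 : ℤ) : ℝ) ≤ ((⌈lam*a^2⌉₊ : ℤ) : ℝ) := by
    push_cast
    calc ((k:ℝ))^2 ≤ lam * a^2 := by
          rw [div_le_iff₀ (by positivity)] at hk2; linarith
      _ ≤ (⌈lam*a^2⌉₊ : ℝ) := Nat.le_ceil _
  have hk4 : k^2 ≤ (⌈lam*a^2⌉₊ : ℤ) := by exact_mod_cast hk3
  have hn3 : ((n^2 : ℕ) : ℝ) ≤ ((⌈lam*h^2/π^2⌉₊ : ℕ) : ℝ) := by
    push_cast
    calc ((n:ℝ))^2 ≤ lam * h^2 / π^2 := by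
          rw [div_le_iff₀ (by positivity)] at hn2
          rw [le_div_iff₀ (by positivity)]; linarith
      _ ≤ (⌈lam*h^2/π^2⌉₊ : ℝ) := Nat.le_ceil _
  have hn4 : n^2 ≤ ⌈lam*h^2/π^2⌉₊ := by exact_mod_cast hn3
  have hK : (0:ℤ) ≤ (⌈lam*a^2⌉₊ : ℤ) := Int.natCast_nonneg _
  constructor <;> constructor <;> simp only []
  · nlinarith [sq_nonneg (k + ⌈lam*a^2⌉₊)]
  · omega
  · nlinarith [sq_nonneg (k - ⌈lam*a^2⌉₊)]
  · nlinarith [hn]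

lemma rect_finite (w h lam : ℝ) (hw : 0 < w) (hh : 0 < h) :
    {p : ℕ × ℕ | 0 < p.1 ∧ 0 < p.2 ∧ π^2 * ((p.1:ℝ)^2/w^2 + (p.2:ℝ)^2/h^2) ≤ lam}.Finite := by
  have hπ : (0:ℝ) < π := Real.pi_pos
  apply Set.Finite.subset (Set.finite_Icc ((1,1) : ℕ × ℕ)
    (⌈lam*w^2/π^2⌉₊, ⌈lam*h^2/π^2⌉₊))
  rintro ⟨m, n⟩ ⟨hm, hn, hle⟩
  have hle' : (m:ℝ)^2*π^2/w^2 + (n:ℝ)^2*π^2/h^2 ≤ lam := by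
    rw [mul_add] at hle
    convert hle using 2 <;> ring
  have hm2 : (m:ℝ)^2*π^2/w^2 ≤ lam := by
    have : (0:ℝ) ≤ (n:ℝ)^2*π^2/h^2 := by positivity
    linarith
  have hn2 : (n:ℝ)^2*π^2/h^2 ≤ lam := by
    have : (0:ℝ) ≤ (m:ℝ)^2*π^2/w^2 := by positivity
    linarith
  have hm3 : ((m^2 : ℕ) : ℝ) ≤ ((⌈lam*w^2/π^2⌉₊ : ℕ) : ℝ) := by
    push_cast
    calc ((m:ℝ))^2 ≤ lam * w^2 / π^2 := by
          rw [div_le_iff₀ (by positivity)] at hm2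
          rw [le_div_iff₀ (by positivity)]; linarith
      _ ≤ (⌈lam*w^2/π^2⌉₊ : ℝ) := Nat.le_ceil _
  have hn3 : ((n^2 : ℕ) : ℝ) ≤ ((⌈lam*h^2/π^2⌉₊ : ℕ) : ℝ) := by
    push_cast
    calc ((n:ℝ))^2 ≤ lam * h^2 / π^2 := by
          rw [div_le_iff₀ (by positivity)] at hn2
          rw [le_div_iff₀ (by positivity)]; linarith
      _ ≤ (⌈lam*h^2/π^2⌉₊ : ℝ) := Nat.le_ceil _
  have hm4 : m^2 ≤ ⌈lam*w^2/π^2⌉₊ := by exact_mod_cast hm3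
  have hn4 : n^2 ≤ ⌈lam*h^2/π^2⌉₊ := by exact_mod_cast hn3
  constructor <;> constructor <;> simp only [] <;> nlinarith

/-- eigenvalues of the cylinder of radius `a` and height `h` are termwise
at most those of the rectangle of width `2πa` and height `h`. -/
theorem stmt_15 (a h : ℝ) (ha : 0 < a) (hh : 0 < h) (j : ℕ) (hj : 0 < j) :
    cylEV a h j ≤ rectEV (2*π*a) h j := by
  have hπ : (0:ℝ) < π := Real.pi_pos
  have hw : (0:ℝ) < 2*π*a := by positivity
  unfold cylEV rectEV
  apply csInf_le_csInf
  · -- bounded below by 0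
    refine ⟨0, fun lam hlam => ?_⟩
    simp only [Set.mem_setOf_eq] at hlam
    have hfin : Finite {p : ℤ × ℕ // 0 < p.2 ∧
        (p.1:ℝ)^2/a^2 + (p.2:ℝ)^2*π^2/h^2 ≤ lam} :=
      (cyl_finite a h lam ha hh).to_subtype
    have hpos : 0 < Nat.card {p : ℤ × ℕ // 0 < p.2 ∧
        (p.1:ℝ)^2/a^2 + (p.2:ℝ)^2*π^2/h^2 ≤ lam} := lt_of_lt_of_le hj hlam
    obtain ⟨⟨⟨k, n⟩, hn, hle⟩⟩ := (Nat.card_pos_iff.mp hpos).1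
    have h1 : (0:ℝ) ≤ (k:ℝ)^2/a^2 := by positivity
    have h2 : (0:ℝ) ≤ (n:ℝ)^2*π^2/h^2 := by positivity
    linarith
  · -- rectangle set is nonempty
    set lam₀ : ℝ := π^2 * ((j:ℝ)^2/(2*π*a)^2 + 1/h^2) with hlam₀
    refine ⟨lam₀, ?_⟩
    simp only [Set.mem_setOf_eq]
    have hfin : Finite {p : ℕ × ℕ // 0 < p.1 ∧ 0 < p.2 ∧
        π^2 * ((p.1:ℝ)^2/(2*π*a)^2 + (p.2:ℝ)^2/h^2) ≤ lam₀} :=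
      (rect_finite (2*π*a) h lam₀ hw hh).to_subtype
    have hmem : ∀ i : Fin j, 0 < i.1 + 1 ∧ 0 < 1 ∧
        π^2 * (((i.1 + 1 : ℕ):ℝ)^2/(2*π*a)^2 + ((1:ℕ):ℝ)^2/h^2) ≤ lam₀ := by
      intro i
      refine ⟨Nat.succ_pos _, Nat.one_pos, ?_⟩
      have hi : ((i.1 + 1 : ℕ) : ℝ) ≤ (j : ℝ) := by exact_mod_cast i.2
      have hi0 : (0:ℝ) ≤ ((i.1 + 1 : ℕ) : ℝ) := Nat.cast_nonneg _
      have hsq : ((i.1 + 1 : ℕ) : ℝ)^2 ≤ (j:ℝ)^2 := by nlinarith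
      rw [hlam₀]
      have h1 : ((1:ℕ):ℝ)^2/h^2 = 1/h^2 := by norm_num
      rw [h1]
      gcongr
    let f : Fin j → {p : ℕ × ℕ // 0 < p.1 ∧ 0 < p.2 ∧
        π^2 * ((p.1:ℝ)^2/(2*π*a)^2 + (p.2:ℝ)^2/h^2) ≤ lam₀} :=
      fun i => ⟨(i.1 + 1, 1), hmem i⟩
    have hfinj : Function.Injective f := by
      intro i₁ i₂ hi
      have : i₁.1 + 1 = i₂.1 + 1 := congrArg (fun p => p.1.1) hi
      exact Fin.ext (by omega)
    calc j = Nat.card (Fin j) := by simp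
      _ ≤ _ := Nat.card_le_card_of_injective f hfinj
  · -- inclusion: rectangle-admissible lam is cylinder-admissible
    intro lam hlam
    simp only [Set.mem_setOf_eq] at hlam ⊢
    have hfin : Finite {p : ℤ × ℕ // 0 < p.2 ∧
        (p.1:ℝ)^2/a^2 + (p.2:ℝ)^2*π^2/h^2 ≤ lam} :=
      (cyl_finite a h lam ha hh).to_subtype
    have hmem : ∀ p : {p : ℕ × ℕ // 0 < p.1 ∧ 0 < p.2 ∧
        π^2 * ((p.1:ℝ)^2/(2*π*a)^2 + (p.2:ℝ)^2/h^2) ≤ lam},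
        0 < p.1.2 ∧ ((foldMap p.1.1 : ℤ):ℝ)^2/a^2 + (p.1.2:ℝ)^2*π^2/h^2 ≤ lam := by
      rintro ⟨⟨m, n⟩, hm, hn, hle⟩
      refine ⟨hn, ?_⟩
      have hsq : ((foldMap m : ℤ):ℝ)^2 ≤ (m:ℝ)^2/4 := by
        have h4 : ((4 * (foldMap m)^2 : ℤ) : ℝ) ≤ (((m:ℤ)^2 : ℤ) : ℝ) := by
          exact_mod_cast foldMap_sq_le m
        push_cast at h4
        linarith
      have hterm : ((foldMap m : ℤ):ℝ)^2/a^2 ≤ π^2 * ((m:ℝ)^2/(2*π*a)^2) := by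
        have hrw : π^2 * ((m:ℝ)^2/(2*π*a)^2) = (m:ℝ)^2/4 / a^2 := by
          field_simp
          ring
        rw [hrw]
        gcongr
      have hterm2 : π^2 * ((n:ℝ)^2/h^2) = (n:ℝ)^2*π^2/h^2 := by ring
      have hle' : π^2 * ((m:ℝ)^2/(2*π*a)^2) + (n:ℝ)^2*π^2/h^2 ≤ lam := by
        rw [mul_add] at hle
        linarith [hle, hterm2.symm]
      linarith
    let f : {p : ℕ × ℕ // 0 < p.1 ∧ 0 < p.2 ∧
        π^2 * ((p.1:ℝ)^2/(2*π*a)^2 + (p.2:ℝ)^2/h^2) ≤ lam} →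
        {p : ℤ × ℕ // 0 < p.2 ∧ (p.1:ℝ)^2/a^2 + (p.2:ℝ)^2*π^2/h^2 ≤ lam} :=
      fun p => ⟨(foldMap p.1.1, p.1.2), hmem p⟩
    have hfinj : Function.Injective f := by
      rintro ⟨⟨m₁, n₁⟩, hm₁, hn₁, _⟩ ⟨⟨m₂, n₂⟩, hm₂, hn₂, _⟩ hi
      have h1 : foldMap m₁ = foldMap m₂ := congrArg (fun q => q.1.1) hi
      have h2 : n₁ = n₂ := congrArg (fun q => q.1.2) hi
      have := foldMap_inj hm₁ hm₂ h1
      simp_all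
    exact le_trans hlam (Nat.card_le_card_of_injective f hfinj)
end
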